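/- Let κ > 1 and c : ℝ → [κ⁻¹, κ] be Lipschitz with constant κ, F(u) = ∫₀^u c, and u_i = 𝔲(R_i, S_i) = F⁻¹(∂ₓ⁻¹((R_i − S_i)/2)) for (R_i, S_i) ∈ L²(𝕋)², i = 1,2. Then ‖c(u₁)R₁ − c(u₂)R₂‖_{L²} + ‖c(u₁)S₁ − c(u₂)S₂‖_{L²} ≤ C(κ) (1 + min(‖R₁‖_{L²}, ‖R₂‖_{L²}) + min(‖S₁‖_{L²}, ‖S₂‖_{L²})) · (‖R₁ − R₂‖_{L²} + ‖S₁ − S₂‖_{L²}) for a constant C(κ) depending only on κ. -/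

import Mathlib

/-!
Write `a = c(u₁)`, `b = c(u₂)`. From `a R₁ − b R₂ = a (R₁ − R₂) + (a − b) R₂` and Minkowski,
`‖a R₁ − b R₂‖ ≤ κ ‖R₁ − R₂‖ + ‖a − b‖_∞ ‖R₂‖`, and symmetrically with `‖R₁‖`, which gives the
minimum. Since `F' = c ≥ κ⁻¹`, `F⁻¹` is `κ`-Lipschitz, and `∂ₓ⁻¹` maps `L¹` to `L^∞` with norm at
most `4`; with `L¹ ≤ L²` on `[0,1]` this gives `‖a − b‖_∞ ≤ 2κ² (‖R₁ − R₂‖ + ‖S₁ − S₂‖)`.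
-/

open MeasureTheory

/-- The zero-average antiderivative operator `∂ₓ⁻¹` on the torus `[0,1]`. -/
noncomputable def Dinv (g : ℝ → ℝ) (x : ℝ) : ℝ :=
  (∫ y in (0:ℝ)..x, g y) - x * (∫ y in (0:ℝ)..1, g y)
    - ∫ y in (0:ℝ)..1, ((∫ z in (0:ℝ)..y, g z) - y * ∫ z in (0:ℝ)..1, g z)

/-- The construction `𝔲(R,S) = F⁻¹(∂ₓ⁻¹((R−S)/2))`. -/
noncomputable def uCon (F R S : ℝ → ℝ) (x : ℝ) : ℝ :=
  Function.invFun F (Dinv (fun y => (R y - S y) / 2) x)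

/-- The `L²(𝕋)` norm on the torus `[0,1]`. -/
noncomputable def L2n (f : ℝ → ℝ) : ℝ := Real.sqrt (∫ x in (0:ℝ)..1, (f x) ^ 2)

open Set Filter

section Primitive

variable {c : ℝ → ℝ} {m : ℝ}

lemma mul_sub_le_integral (hc : Continuous c) (hcm : ∀ r, m ≤ c r) {x y : ℝ} (hxy : x ≤ y) :
    m * (y - x) ≤ ∫ r in x..y, c r := by
  simpa [mul_comm] using intervalIntegral.integral_mono_on hxy intervalIntegrable_const
    (hc.intervalIntegrable (μ := volume) x y) fun r _ => hcm r

lemma antilipschitzWith_primitive (hc : Continuous c) (hm : 0 < m) (hcm : ∀ r, m ≤ c r) :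
    AntilipschitzWith (Real.toNNReal m⁻¹) (fun v => ∫ r in (0:ℝ)..v, c r) := by
  refine AntilipschitzWith.of_le_mul_dist fun x y => ?_
  wlog hxy : x ≤ y generalizing x y
  · rw [dist_comm, dist_comm (∫ r in (0:ℝ)..x, c r)]
    exact this y x (le_of_not_ge hxy)
  rw [Real.coe_toNNReal _ (inv_nonneg.2 hm.le), Real.dist_eq, Real.dist_eq, abs_sub_comm,
    abs_sub_comm (∫ r in (0:ℝ)..x, c r), intervalIntegral.integral_interval_sub_left
      (hc.intervalIntegrable 0 y) (hc.intervalIntegrable 0 x), le_inv_mul_iff₀ hm,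
    abs_of_nonneg (sub_nonneg.2 hxy)]
  exact (mul_sub_le_integral hc hcm hxy).trans (le_abs_self _)

lemma surjective_primitive (hc : Continuous c) (hm : 0 < m) (hcm : ∀ r, m ≤ c r) :
    Function.Surjective (fun v => ∫ r in (0:ℝ)..v, c r) := by
  refine Continuous.surjective (intervalIntegral.continuous_primitive
    (fun a b => hc.intervalIntegrable a b) 0) ?_ ?_
  · refine tendsto_atTop_mono' _ ?_ (tendsto_id.const_mul_atTop hm)
    filter_upwards [eventually_ge_atTop 0] with v hv
    simpa using mul_sub_le_integral hc hcm hv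
  · refine tendsto_atBot_mono' _ ?_ (tendsto_id.const_mul_atBot hm)
    filter_upwards [eventually_le_atBot 0] with v hv
    have := mul_sub_le_integral hc hcm hv
    rw [intervalIntegral.integral_symm] at this
    simp only [id]
    linarith

lemma lipschitzWith_invFun_primitive (hc : Continuous c) (hm : 0 < m) (hcm : ∀ r, m ≤ c r) :
    LipschitzWith (Real.toNNReal m⁻¹) (Function.invFun fun v => ∫ r in (0:ℝ)..v, c r) :=
  (antilipschitzWith_primitive hc hm hcm).to_rightInverse
    (Function.rightInverse_invFun (surjective_primitive hc hm hcm))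

end Primitive

noncomputable def periodicPrimitive (g : ℝ → ℝ) (y : ℝ) : ℝ :=
  (∫ z in (0:ℝ)..y, g z) - y * ∫ z in (0:ℝ)..1, g z

lemma Dinv_eq_periodicPrimitive_sub (g : ℝ → ℝ) (x : ℝ) :
    Dinv g x = periodicPrimitive g x - ∫ y in (0:ℝ)..1, periodicPrimitive g y := rfl

section Dinv

variable {g g₁ g₂ : ℝ → ℝ}

lemma IntervalIntegrable.mono_Icc_zero_one (hg : IntervalIntegrable g volume 0 1) {t : ℝ}
    (ht : t ∈ Icc (0:ℝ) 1) : IntervalIntegrable g volume 0 t :=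
  hg.mono_set (uIcc_subset_uIcc left_mem_uIcc (by rwa [uIcc_of_le zero_le_one]))

lemma continuousOn_periodicPrimitive (hg : IntervalIntegrable g volume 0 1) :
    ContinuousOn (periodicPrimitive g) (Icc 0 1) := by
  have := intervalIntegral.continuousOn_primitive_interval' hg left_mem_uIcc
  rw [uIcc_of_le zero_le_one] at this
  exact this.sub (continuousOn_id.mul continuousOn_const)

lemma continuousOn_Dinv (hg : IntervalIntegrable g volume 0 1) : ContinuousOn (Dinv g) (Icc 0 1) :=
  (continuousOn_periodicPrimitive hg).sub continuousOn_const

lemma periodicPrimitive_sub (h₁ : IntervalIntegrable g₁ volume 0 1)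
    (h₂ : IntervalIntegrable g₂ volume 0 1) {y : ℝ} (hy : y ∈ Icc (0:ℝ) 1) :
    periodicPrimitive (fun z => g₁ z - g₂ z) y
      = periodicPrimitive g₁ y - periodicPrimitive g₂ y := by
  have hsub : ∀ t ∈ Icc (0:ℝ) 1,
      ∫ z in (0:ℝ)..t, g₁ z - g₂ z = (∫ z in (0:ℝ)..t, g₁ z) - ∫ z in (0:ℝ)..t, g₂ z :=
    fun t ht => intervalIntegral.integral_sub (h₁.mono_Icc_zero_one ht) (h₂.mono_Icc_zero_one ht)
  simp only [periodicPrimitive, hsub y hy, hsub 1 (right_mem_Icc.2 zero_le_one)]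
  ring

lemma Dinv_sub (h₁ : IntervalIntegrable g₁ volume 0 1) (h₂ : IntervalIntegrable g₂ volume 0 1)
    {x : ℝ} (hx : x ∈ Icc (0:ℝ) 1) :
    Dinv (fun z => g₁ z - g₂ z) x = Dinv g₁ x - Dinv g₂ x := by
  have hint : ∀ {g : ℝ → ℝ}, IntervalIntegrable g volume 0 1 →
      IntervalIntegrable (periodicPrimitive g) volume 0 1 := fun hg =>
    (continuousOn_periodicPrimitive hg).intervalIntegrable_of_Icc zero_le_one
  have hmean : ∫ y in (0:ℝ)..1, periodicPrimitive (fun z => g₁ z - g₂ z) y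
      = ∫ y in (0:ℝ)..1, periodicPrimitive g₁ y - periodicPrimitive g₂ y := by
    refine intervalIntegral.integral_congr fun y hy => ?_
    rw [uIcc_of_le zero_le_one] at hy
    exact periodicPrimitive_sub h₁ h₂ hy
  rw [Dinv_eq_periodicPrimitive_sub, Dinv_eq_periodicPrimitive_sub,
    Dinv_eq_periodicPrimitive_sub, periodicPrimitive_sub h₁ h₂ hx, hmean,
    intervalIntegral.integral_sub (hint h₁) (hint h₂)]
  ring

lemma abs_primitive_le (hg : IntervalIntegrable g volume 0 1) {t : ℝ} (ht : t ∈ Icc (0:ℝ) 1) :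
    |∫ z in (0:ℝ)..t, g z| ≤ ∫ z in (0:ℝ)..1, |g z| :=
  (intervalIntegral.abs_integral_le_integral_abs ht.1).trans <|
    intervalIntegral.integral_mono_interval le_rfl ht.1 ht.2
      (ae_of_all _ fun _ => abs_nonneg _) hg.abs

lemma abs_periodicPrimitive_le (hg : IntervalIntegrable g volume 0 1) {y : ℝ}
    (hy : y ∈ Icc (0:ℝ) 1) : |periodicPrimitive g y| ≤ 2 * ∫ z in (0:ℝ)..1, |g z| := by
  have h₁ := abs_primitive_le hg hy
  have h₂ := abs_primitive_le hg (right_mem_Icc.2 zero_le_one)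
  have hy' : |y| ≤ 1 := abs_le.2 ⟨by linarith [hy.1], hy.2⟩
  calc |periodicPrimitive g y|
      ≤ |∫ z in (0:ℝ)..y, g z| + |y| * |∫ z in (0:ℝ)..1, g z| := by
        rw [periodicPrimitive, ← abs_mul]; exact abs_sub _ _
    _ ≤ (∫ z in (0:ℝ)..1, |g z|) + 1 * ∫ z in (0:ℝ)..1, |g z| := by gcongr
    _ = 2 * ∫ z in (0:ℝ)..1, |g z| := by ring

lemma abs_Dinv_le (hg : IntervalIntegrable g volume 0 1) {x : ℝ} (hx : x ∈ Icc (0:ℝ) 1) :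
    |Dinv g x| ≤ 4 * ∫ z in (0:ℝ)..1, |g z| := by
  have hmean : |∫ y in (0:ℝ)..1, periodicPrimitive g y| ≤ 2 * ∫ z in (0:ℝ)..1, |g z| := by
    have := intervalIntegral.norm_integral_le_of_norm_le_const (a := 0) (b := 1)
      (f := periodicPrimitive g) fun y hy =>
      abs_periodicPrimitive_le hg (Ioc_subset_Icc_self (by simpa using hy))
    simpa using this
  rw [Dinv_eq_periodicPrimitive_sub]
  linarith [abs_sub (periodicPrimitive g x) (∫ y in (0:ℝ)..1, periodicPrimitive g y),
    abs_periodicPrimitive_le hg hx]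

end Dinv

local notation "μ𝕋" => volume.restrict (Ioc (0:ℝ) 1)

instance : IsProbabilityMeasure μ𝕋 := ⟨by simp⟩

section L2

variable {f g : ℝ → ℝ}

lemma MeasureTheory.MemLp.intervalIntegrable_zero_one (hf : MemLp f 2 μ𝕋) :
    IntervalIntegrable f volume 0 1 :=
  (intervalIntegrable_iff_integrableOn_Ioc_of_le zero_le_one).2 (hf.integrable one_le_two)

lemma L2n_eq_toReal_eLpNorm (hf : MemLp f 2 μ𝕋) : L2n f = (eLpNorm f 2 μ𝕋).toReal := by
  rw [hf.eLpNorm_eq_integral_rpow_norm two_ne_zero ENNReal.ofNat_ne_top,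
    ENNReal.toReal_ofReal (by positivity), L2n, intervalIntegral.integral_of_le zero_le_one,
    Real.sqrt_eq_rpow]
  simp [Real.norm_eq_abs]

lemma L2n_add_le (hf : MemLp f 2 μ𝕋) (hg : MemLp g 2 μ𝕋) :
    L2n (fun x => f x + g x) ≤ L2n f + L2n g := by
  rw [L2n_eq_toReal_eLpNorm (f := fun x => f x + g x) (hf.add hg), L2n_eq_toReal_eLpNorm hf,
    L2n_eq_toReal_eLpNorm hg, ← ENNReal.toReal_add hf.eLpNorm_ne_top hg.eLpNorm_ne_top]
  exact ENNReal.toReal_mono (ENNReal.add_ne_top.2 ⟨hf.eLpNorm_ne_top, hg.eLpNorm_ne_top⟩)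
    (eLpNorm_add_le hf.1 hg.1 one_le_two)

lemma L2n_le_mul_of_ae_abs_le {k : ℝ} (hk : 0 ≤ k) (hg : MemLp g 2 μ𝕋)
    (h : ∀ᵐ x ∂μ𝕋, |f x| ≤ k * |g x|) : L2n f ≤ k * L2n g := by
  have hg2 : Integrable (fun x => g x ^ 2) μ𝕋 := (memLp_two_iff_integrable_sq hg.1).1 hg
  calc L2n f ≤ Real.sqrt (∫ x in (0:ℝ)..1, k ^ 2 * g x ^ 2) := by
        rw [L2n, intervalIntegral.integral_of_le zero_le_one,
          intervalIntegral.integral_of_le zero_le_one]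
        refine Real.sqrt_le_sqrt (integral_mono_of_nonneg (ae_of_all _ fun x => sq_nonneg _)
          (hg2.const_mul _) (h.mono fun x hx => ?_))
        dsimp only
        rw [← sq_abs (f x), ← sq_abs (g x), ← mul_pow]
        exact pow_le_pow_left₀ (abs_nonneg _) hx 2
    _ = k * L2n g := by
        rw [intervalIntegral.integral_const_mul, Real.sqrt_mul (sq_nonneg k), Real.sqrt_sq hk, L2n]

lemma L2n_sub_comm : L2n (fun x => f x - g x) = L2n (fun x => g x - f x) := by
  simp only [L2n, sub_sq_comm (f _)]

lemma integral_abs_le_L2n (hf : MemLp f 2 μ𝕋) : ∫ x in (0:ℝ)..1, |f x| ≤ L2n f := by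
  rw [intervalIntegral.integral_of_le zero_le_one, L2n_eq_toReal_eLpNorm hf]
  simp only [← Real.norm_eq_abs]
  rw [integral_norm_eq_lintegral_enorm hf.1, ← eLpNorm_one_eq_lintegral_enorm]
  exact ENNReal.toReal_mono hf.eLpNorm_ne_top (eLpNorm_le_eLpNorm_of_exponent_le one_le_two hf.1)

lemma memLp_two_of_integrableOn_sq (hm : Measurable f)
    (h : IntegrableOn (fun x => f x ^ 2) (Icc (0:ℝ) 1)) : MemLp f 2 μ𝕋 :=
  (memLp_two_iff_integrable_sq hm.aestronglyMeasurable).2 (h.mono_set Ioc_subset_Icc_self)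

end L2

section Coefficient

variable {a b P Q : ℝ → ℝ} {K M : ℝ}

lemma L2n_mul_sub_mul_le (ha : AEStronglyMeasurable a μ𝕋) (hb : AEStronglyMeasurable b μ𝕋)
    (haK : ∀ x, |a x| ≤ K) (hab : ∀ x ∈ Ioc (0:ℝ) 1, |a x - b x| ≤ M)
    (hP : MemLp P 2 μ𝕋) (hQ : MemLp Q 2 μ𝕋) :
    L2n (fun x => a x * P x - b x * Q x) ≤ K * L2n (fun x => P x - Q x) + M * L2n Q := by
  have hK : 0 ≤ K := (abs_nonneg _).trans (haK 0)
  have hM : 0 ≤ M := (abs_nonneg _).trans (hab 1 (right_mem_Ioc.2 zero_lt_one))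
  have hPQ : MemLp (fun x => P x - Q x) 2 μ𝕋 := hP.sub hQ
  have h₁ : ∀ᵐ x ∂μ𝕋, |a x * (P x - Q x)| ≤ K * |P x - Q x| :=
    ae_of_all _ fun x => by rw [abs_mul]; exact mul_le_mul_of_nonneg_right (haK x) (abs_nonneg _)
  have h₂ : ∀ᵐ x ∂μ𝕋, |(a x - b x) * Q x| ≤ M * |Q x| :=
    (ae_restrict_mem measurableSet_Ioc).mono fun x hx => by
      rw [abs_mul]; exact mul_le_mul_of_nonneg_right (hab x hx) (abs_nonneg _)
  have hm₁ : MemLp (fun x => a x * (P x - Q x)) 2 μ𝕋 :=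
    hPQ.of_le_mul (ha.mul hPQ.1) (by simpa only [Real.norm_eq_abs] using h₁)
  have hm₂ : MemLp (fun x => (a x - b x) * Q x) 2 μ𝕋 :=
    hQ.of_le_mul ((ha.sub hb).mul hQ.1) (by simpa only [Real.norm_eq_abs] using h₂)
  calc L2n (fun x => a x * P x - b x * Q x)
      = L2n (fun x => a x * (P x - Q x) + (a x - b x) * Q x) := by congr 1; ext x; ring
    _ ≤ L2n (fun x => a x * (P x - Q x)) + L2n (fun x => (a x - b x) * Q x) :=
        L2n_add_le hm₁ hm₂
    _ ≤ K * L2n (fun x => P x - Q x) + M * L2n Q :=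
        add_le_add (L2n_le_mul_of_ae_abs_le hK hPQ h₁) (L2n_le_mul_of_ae_abs_le hM hQ h₂)

lemma L2n_mul_sub_mul_le_min (ha : AEStronglyMeasurable a μ𝕋) (hb : AEStronglyMeasurable b μ𝕋)
    (haK : ∀ x, |a x| ≤ K) (hbK : ∀ x, |b x| ≤ K) (hab : ∀ x ∈ Ioc (0:ℝ) 1, |a x - b x| ≤ M)
    (hP : MemLp P 2 μ𝕋) (hQ : MemLp Q 2 μ𝕋) :
    L2n (fun x => a x * P x - b x * Q x)
      ≤ K * L2n (fun x => P x - Q x) + M * min (L2n P) (L2n Q) := by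
  rcases le_total (L2n P) (L2n Q) with h | h
  · rw [min_eq_left h, L2n_sub_comm, L2n_sub_comm (f := P)]
    exact L2n_mul_sub_mul_le hb ha hbK (fun x hx => abs_sub_comm (a x) (b x) ▸ hab x hx) hQ hP
  · rw [min_eq_right h]
    exact L2n_mul_sub_mul_le ha hb haK hab hP hQ

end Coefficient

section uCon

variable {c : ℝ → ℝ} {m : ℝ} {R S R₁ S₁ R₂ S₂ : ℝ → ℝ}

lemma continuousOn_uCon (hc : Continuous c) (hm : 0 < m) (hcm : ∀ r, m ≤ c r)
    (hRS : IntervalIntegrable (fun y => (R y - S y) / 2) volume 0 1) :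
    ContinuousOn (uCon (fun v => ∫ r in (0:ℝ)..v, c r) R S) (Icc 0 1) :=
  (lipschitzWith_invFun_primitive hc hm hcm).continuous.comp_continuousOn (continuousOn_Dinv hRS)

lemma intervalIntegrable_half_sub (hR : MemLp R 2 μ𝕋) (hS : MemLp S 2 μ𝕋) :
    IntervalIntegrable (fun y => (R y - S y) / 2) volume 0 1 :=
  (hR.sub hS).intervalIntegrable_zero_one.div_const 2

lemma integral_abs_sub_half_le (hR₁ : MemLp R₁ 2 μ𝕋) (hS₁ : MemLp S₁ 2 μ𝕋)
    (hR₂ : MemLp R₂ 2 μ𝕋) (hS₂ : MemLp S₂ 2 μ𝕋) :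
    ∫ y in (0:ℝ)..1, |(R₁ y - S₁ y) / 2 - (R₂ y - S₂ y) / 2|
      ≤ (L2n (fun y => R₁ y - R₂ y) + L2n (fun y => S₁ y - S₂ y)) / 2 := by
  have hR : IntervalIntegrable (fun y => |R₁ y - R₂ y|) volume 0 1 :=
    (hR₁.sub hR₂).intervalIntegrable_zero_one.abs
  have hS : IntervalIntegrable (fun y => |S₁ y - S₂ y|) volume 0 1 :=
    (hS₁.sub hS₂).intervalIntegrable_zero_one.abs
  calc ∫ y in (0:ℝ)..1, |(R₁ y - S₁ y) / 2 - (R₂ y - S₂ y) / 2|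
      ≤ ∫ y in (0:ℝ)..1, (|R₁ y - R₂ y| / 2 + |S₁ y - S₂ y| / 2) := by
        refine intervalIntegral.integral_mono_on zero_le_one ?_ ((hR.div_const 2).add
          (hS.div_const 2)) fun y _ => ?_
        · exact ((intervalIntegrable_half_sub hR₁ hS₁).sub
            (intervalIntegrable_half_sub hR₂ hS₂)).abs
        · rw [show (R₁ y - S₁ y) / 2 - (R₂ y - S₂ y) / 2
              = ((R₁ y - R₂ y) - (S₁ y - S₂ y)) / 2 by ring, abs_div, abs_two]
          linarith [abs_sub (R₁ y - R₂ y) (S₁ y - S₂ y)]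
    _ = ((∫ y in (0:ℝ)..1, |R₁ y - R₂ y|) + ∫ y in (0:ℝ)..1, |S₁ y - S₂ y|) / 2 := by
        rw [intervalIntegral.integral_add (hR.div_const 2) (hS.div_const 2),
          intervalIntegral.integral_div, intervalIntegral.integral_div]; ring
    _ ≤ _ := by
        gcongr
        exacts [integral_abs_le_L2n (hR₁.sub hR₂), integral_abs_le_L2n (hS₁.sub hS₂)]

lemma abs_uCon_sub_uCon_le (hc : Continuous c) (hm : 0 < m) (hcm : ∀ r, m ≤ c r)
    (hR₁ : MemLp R₁ 2 μ𝕋) (hS₁ : MemLp S₁ 2 μ𝕋) (hR₂ : MemLp R₂ 2 μ𝕋) (hS₂ : MemLp S₂ 2 μ𝕋)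
    {x : ℝ} (hx : x ∈ Icc (0:ℝ) 1) :
    |uCon (fun v => ∫ r in (0:ℝ)..v, c r) R₁ S₁ x - uCon (fun v => ∫ r in (0:ℝ)..v, c r) R₂ S₂ x|
      ≤ 2 * m⁻¹ * (L2n (fun y => R₁ y - R₂ y) + L2n (fun y => S₁ y - S₂ y)) := by
  have hg₁ := intervalIntegrable_half_sub hR₁ hS₁
  have hg₂ := intervalIntegrable_half_sub hR₂ hS₂
  calc _ ≤ m⁻¹ * |Dinv (fun y => (R₁ y - S₁ y) / 2) x - Dinv (fun y => (R₂ y - S₂ y) / 2) x| := by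
        have := (lipschitzWith_invFun_primitive hc hm hcm).dist_le_mul
          (Dinv (fun y => (R₁ y - S₁ y) / 2) x) (Dinv (fun y => (R₂ y - S₂ y) / 2) x)
        rwa [Real.coe_toNNReal _ (inv_nonneg.2 hm.le), Real.dist_eq, Real.dist_eq] at this
    _ ≤ m⁻¹ * (4 * ∫ y in (0:ℝ)..1, |(R₁ y - S₁ y) / 2 - (R₂ y - S₂ y) / 2|) := by
        rw [← Dinv_sub hg₁ hg₂ hx]
        gcongr
        exact abs_Dinv_le (hg₁.sub hg₂) hx
    _ ≤ m⁻¹ * (4 * ((L2n (fun y => R₁ y - R₂ y) + L2n (fun y => S₁ y - S₂ y)) / 2)) := by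
        gcongr; exact integral_abs_sub_half_le hR₁ hS₁ hR₂ hS₂
    _ = _ := by ring

end uCon

/-- with `u_i = 𝔲(R_i, S_i)`, one has
`‖c(u₁)R₁ − c(u₂)R₂‖_{L²} + ‖c(u₁)S₁ − c(u₂)S₂‖_{L²}
  ≤ C(κ)(1 + min(‖R₁‖,‖R₂‖) + min(‖S₁‖,‖S₂‖))(‖R₁−R₂‖ + ‖S₁−S₂‖)`
for a constant `C(κ)` depending only on `κ`. -/
theorem cR_cS_L2_difference_bound (κ : ℝ) (hκ : 1 < κ) :
    ∃ C : ℝ, 0 < C ∧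
      ∀ (c : ℝ → ℝ), Continuous c → (∀ a b, |c a - c b| ≤ κ * |a - b|) →
        (∀ r, κ⁻¹ ≤ c r) → (∀ r, c r ≤ κ) →
      ∀ (F : ℝ → ℝ), (∀ v, F v = ∫ r in (0:ℝ)..v, c r) →
      ∀ (R₁ S₁ R₂ S₂ : ℝ → ℝ),
        Measurable R₁ → Measurable S₁ → Measurable R₂ → Measurable S₂ →
        IntegrableOn (fun x => (R₁ x) ^ 2) (Set.Icc (0:ℝ) 1) →
        IntegrableOn (fun x => (S₁ x) ^ 2) (Set.Icc (0:ℝ) 1) →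
        IntegrableOn (fun x => (R₂ x) ^ 2) (Set.Icc (0:ℝ) 1) →
        IntegrableOn (fun x => (S₂ x) ^ 2) (Set.Icc (0:ℝ) 1) →
        L2n (fun x => c (uCon F R₁ S₁ x) * R₁ x - c (uCon F R₂ S₂ x) * R₂ x)
          + L2n (fun x => c (uCon F R₁ S₁ x) * S₁ x - c (uCon F R₂ S₂ x) * S₂ x) ≤
        C * (1 + min (L2n R₁) (L2n R₂) + min (L2n S₁) (L2n S₂))
          * (L2n (fun x => R₁ x - R₂ x) + L2n (fun x => S₁ x - S₂ x)) := by
  have hκ0 : 0 < κ := one_pos.trans hκ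
  refine ⟨2 * κ ^ 2, by positivity, ?_⟩
  intro c hc hlip hlb hub F hF R₁ S₁ R₂ S₂ hmR₁ hmS₁ hmR₂ hmS₂ hR₁ hS₁ hR₂ hS₂
  obtain rfl : F = fun v => ∫ r in (0:ℝ)..v, c r := funext hF
  set F : ℝ → ℝ := fun v => ∫ r in (0:ℝ)..v, c r
  replace hR₁ := memLp_two_of_integrableOn_sq hmR₁ hR₁
  replace hS₁ := memLp_two_of_integrableOn_sq hmS₁ hS₁
  replace hR₂ := memLp_two_of_integrableOn_sq hmR₂ hR₂
  replace hS₂ := memLp_two_of_integrableOn_sq hmS₂ hS₂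
  have hm : 0 < κ⁻¹ := inv_pos.2 hκ0
  have hcκ : ∀ r, |c r| ≤ κ := fun r => abs_le.2 ⟨by linarith [hlb r], hub r⟩
  have hmeas : ∀ {R S : ℝ → ℝ}, MemLp R 2 μ𝕋 → MemLp S 2 μ𝕋 →
      AEStronglyMeasurable (fun x => c (uCon F R S x)) μ𝕋 := fun hR hS =>
    (hc.comp_continuousOn ((continuousOn_uCon hc hm hlb (intervalIntegrable_half_sub hR hS)).mono
      Ioc_subset_Icc_self)).aestronglyMeasurable measurableSet_Ioc
  set DR := L2n (fun x => R₁ x - R₂ x)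
  set DS := L2n (fun x => S₁ x - S₂ x)
  have hcu : ∀ x ∈ Ioc (0:ℝ) 1,
      |c (uCon F R₁ S₁ x) - c (uCon F R₂ S₂ x)| ≤ 2 * κ ^ 2 * (DR + DS) := fun x hx =>
    calc _ ≤ κ * |uCon F R₁ S₁ x - uCon F R₂ S₂ x| := hlip _ _
      _ ≤ κ * (2 * κ⁻¹⁻¹ * (DR + DS)) := by
          gcongr; exact abs_uCon_sub_uCon_le hc hm hlb hR₁ hS₁ hR₂ hS₂ (Ioc_subset_Icc_self hx)
      _ = _ := by rw [inv_inv]; ring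
  have hboundR := L2n_mul_sub_mul_le_min (hmeas hR₁ hS₁) (hmeas hR₂ hS₂) (fun _ => hcκ _)
    (fun _ => hcκ _) hcu hR₁ hR₂
  have hboundS := L2n_mul_sub_mul_le_min (hmeas hR₁ hS₁) (hmeas hR₂ hS₂) (fun _ => hcκ _)
    (fun _ => hcκ _) hcu hS₁ hS₂
  have hκ_le : 0 ≤ (2 * κ ^ 2 - κ) * (DR + DS) :=
    mul_nonneg (by nlinarith) (add_nonneg (Real.sqrt_nonneg _) (Real.sqrt_nonneg _))
  linarith
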